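/- The quotient V_{D,d}/V_{D,d+1} is spanned by the images of the expansions B_S where D is a dessin with exactly d edges and S is the set of all edges of D; in particular, if there are only finitely many isomorphism classes of dessins with exactly d edges, this quotient is finite dimensional. -/

import Mathlib

set_option linter.unusedVariables false
open scoped Classical

/-- The combinatorial data of a dessin d'enfants on vertex type `V` and edge type `E`:
each edge has a black end and a white end (so every edge joins the black class `V₀`
to the white class `V₁`, where the classes are given by the two-coloring `color`),
together with a cyclic ordering of the edges incident at each vertex, encoded as a
strict cyclic betweenness relation `sbtw v a b c` on the edges incident to `v`. -/
structure PreDessin (V E : Type) : Type where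
  blackEnd : E → V
  whiteEnd : E → V
  color : V → Bool
  color_black : ∀ e, color (blackEnd e) = false
  color_white : ∀ e, color (whiteEnd e) = true
  sbtw : V → E → E → E → Prop
  sbtw_incident : ∀ v a b c, sbtw v a b c →
      (blackEnd a = v ∨ whiteEnd a = v) ∧ (blackEnd b = v ∨ whiteEnd b = v) ∧
        (blackEnd c = v ∨ whiteEnd c = v)
  sbtw_cyclic : ∀ v a b c, sbtw v a b c → sbtw v b c a
  sbtw_asymm : ∀ v a b c, sbtw v a b c → ¬ sbtw v c b a
  sbtw_trans : ∀ v a b c d, sbtw v a b c → sbtw v a c d → sbtw v a b d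
  sbtw_total : ∀ v a b c,
      (blackEnd a = v ∨ whiteEnd a = v) → (blackEnd b = v ∨ whiteEnd b = v) →
      (blackEnd c = v ∨ whiteEnd c = v) → a ≠ b → b ≠ c → a ≠ c →
      sbtw v a b c ∨ sbtw v c b a

/-- A dessin d'enfants: a finite vertex set, a finite edge set, and the dessin data. -/
structure Dessin : Type 1 where
  V : Type
  E : Type
  fintV : Fintype V
  fintE : Fintype E
  str : PreDessin V E

instance (D : Dessin) : Fintype D.V := D.fintV
instance (D : Dessin) : Fintype D.E := D.fintE

/-- Deletion of a set `T` of edges from a dessin: the remaining edges keep their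
endpoints and colors, and the cyclic ordering at each vertex is the induced
(restricted) one. -/
noncomputable def Dessin.delete (D : Dessin) (T : Set D.E) : Dessin where
  V := D.V
  E := {e : D.E // e ∉ T}
  fintV := D.fintV
  fintE := Subtype.fintype _
  str :=
    { blackEnd := fun e => D.str.blackEnd e.1
      whiteEnd := fun e => D.str.whiteEnd e.1
      color := D.str.color
      color_black := fun e => D.str.color_black e.1
      color_white := fun e => D.str.color_white e.1
      sbtw := fun v a b c => D.str.sbtw v a.1 b.1 c.1
      sbtw_incident := fun v a b c h => D.str.sbtw_incident v _ _ _ h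
      sbtw_cyclic := fun v a b c h => D.str.sbtw_cyclic v _ _ _ h
      sbtw_asymm := fun v a b c h => D.str.sbtw_asymm v _ _ _ h
      sbtw_trans := fun v a b c d h1 h2 => D.str.sbtw_trans v _ _ _ _ h1 h2
      sbtw_total := fun v a b c ha hb hc hab hbc hac =>
        D.str.sbtw_total v a.1 b.1 c.1 ha hb hc
          (fun h => hab (Subtype.ext h)) (fun h => hbc (Subtype.ext h))
          (fun h => hac (Subtype.ext h)) }

/-- Isomorphism of dessins: bijections of vertices and edges preserving endpoints,
colors and the cyclic orderings. -/
def DessinRel (D1 D2 : Dessin) : Prop :=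
  ∃ (eV : D1.V ≃ D2.V) (eE : D1.E ≃ D2.E),
    (∀ e, D2.str.blackEnd (eE e) = eV (D1.str.blackEnd e)) ∧
    (∀ e, D2.str.whiteEnd (eE e) = eV (D1.str.whiteEnd e)) ∧
    (∀ v, D2.str.color (eV v) = D1.str.color v) ∧
    (∀ v a b c, D2.str.sbtw (eV v) (eE a) (eE b) (eE c) ↔ D1.str.sbtw v a b c)

/-- Isomorphism classes of dessins d'enfants. -/
def DessinIso : Type 1 := Quot DessinRel

/-- The isomorphism class of a dessin. -/
def Dessin.cl (D : Dessin) : DessinIso := Quot.mk _ D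

/-- The Vassiliev space: the free complex vector space on isomorphism classes of dessins. -/
abbrev Vs : Type 1 := DessinIso →₀ ℂ

/-- The expansion `B_S = ∑_{T ⊆ S} (-1)^{|T|} [D \ T]` of a dessin `D` with
optional edge set `S`. -/
noncomputable def expandE (D : Dessin) (S : Finset D.E) : Vs :=
  ∑ T ∈ S.powerset, ((-1 : ℂ) ^ T.card) • Finsupp.single (D.delete (↑T : Set D.E)).cl 1

/-- The dessin filtration: `Vd d` is the span of all expansions of dessins with `d`
optional edges. -/
noncomputable def Vd (d : ℕ) : Submodule ℂ Vs :=
  Submodule.span ℂ {x | ∃ (D : Dessin) (S : Finset D.E), S.card = d ∧ x = expandE D S}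

/-! The deletion identity `B_{S ∪ {e}}(D) = B_S(D) - B_S(D \ e)` for an edge `e ∉ S` does all the
work. Read with `S ∪ {e}` of size `d + 1`, it shows `V_{D,d+1} ⊆ V_{D,d}`. Read with `|S| = d`, it
writes `B_S(D)` as an element of `V_{D,d+1}` plus `B_S(D \ e)`, and deleting edges outside `S` one
at a time ends at a dessin whose edges are all in `S`. The resulting `B_E(D)` is an invariant of the
isomorphism class of `D`, so finitely many classes give finitely many spanning vectors. -/

@[to_additive]
theorem Finset.prod_powerset_map {α β M : Type*} [CommMonoid M] (f : α ↪ β) (s : Finset α)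
    (g : Finset β → M) :
    ∏ t ∈ (s.map f).powerset, g t = ∏ t ∈ s.powerset, g (t.map f) := by
  refine (Finset.prod_nbij (fun t : Finset α => t.map f) (fun t ht => ?_)
    (fun _ _ _ _ h => Finset.map_injective f h) (fun t ht => ?_) (fun _ _ => rfl)).symm
  · exact Finset.mem_powerset.2 (Finset.map_subset_map.2 (Finset.mem_powerset.1 ht))
  · obtain ⟨u, hu, rfl⟩ := Finset.subset_map_iff.1 (Finset.mem_powerset.1 ht)
    exact ⟨u, Finset.mem_powerset.2 hu, rfl⟩

namespace Dessin

theorem delete_delete_cl (D : Dessin) (T : Set D.E) (U : Set (D.delete T).E) :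
    ((D.delete T).delete U).cl = (D.delete (T ∪ Subtype.val '' U)).cl :=
  Quot.sound ⟨Equiv.refl _,
    { toFun := fun f => ⟨f.1.1, by
        rintro (h | ⟨g, hg, hgf⟩)
        · exact f.1.2 h
        · exact f.2 (Subtype.ext hgf ▸ hg)⟩
      invFun := fun g => ⟨⟨g.1, fun h => g.2 (Or.inl h)⟩, fun h => g.2 (Or.inr ⟨_, h, rfl⟩)⟩ },
    fun _ => rfl, fun _ => rfl, fun _ => rfl, fun _ _ _ _ => Iff.rfl⟩

theorem card_delete_singleton (D : Dessin) (e : D.E) :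
    Fintype.card (D.delete {e}).E = Fintype.card D.E - 1 := by
  calc Fintype.card (D.delete {e}).E = Fintype.card {f : D.E // f ∉ ({e} : Set D.E)} :=
        Fintype.card_congr (Equiv.refl _)
    _ = Fintype.card D.E - 1 := by simp [Fintype.card_subtype_compl]

-- Stated at the type `(D.delete {e}).E`, as it occurs in `expandE_insert`, so that it rewrites there.
theorem card_subtype_notMem_singleton {D : Dessin} {S : Finset D.E} {e : D.E}
    (he : e ∉ S) :
    Finset.card (α := (D.delete {e}).E) (S.subtype (· ∉ ({e} : Set D.E))) = S.card :=
  (Finset.card_subtype _ S).trans <| congrArg Finset.card <|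
    Finset.filter_true_of_mem fun f hf hfe => he (Set.mem_singleton_iff.1 hfe ▸ hf)

end Dessin

theorem DessinRel.expandE_univ_eq {D₁ D₂ : Dessin} (h : DessinRel D₁ D₂) :
    expandE D₁ Finset.univ = expandE D₂ Finset.univ := by
  obtain ⟨eV, eE, hb, hw, hc, hs⟩ := h
  have hdel (T : Finset D₁.E) :
      (D₁.delete (T : Set D₁.E)).cl = (D₂.delete (T.map eE.toEmbedding : Set D₂.E)).cl :=
    Quot.sound ⟨eV, eE.subtypeEquiv fun e => by simp,
      fun e => hb e.1, fun e => hw e.1, hc, fun v a b c => hs v a.1 b.1 c.1⟩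
  simp only [expandE, ← Finset.map_univ_equiv eE, Finset.sum_powerset_map, Finset.card_map, hdel]

theorem expandE_insert (D : Dessin) {S : Finset D.E} {e : D.E} (he : e ∉ S) :
    expandE D (insert e S) =
      expandE D S - expandE (D.delete {e}) (S.subtype (· ∉ ({e} : Set D.E))) := by
  have hS : (S.subtype (· ∉ ({e} : Set D.E))).map (Function.Embedding.subtype _) = S :=
    Finset.subtype_map_of_mem fun f hf => by rintro rfl; exact he hf
  simp only [expandE]
  rw [Finset.sum_powerset_insert he, sub_eq_add_neg, ← Finset.sum_neg_distrib]
  congr 1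
  conv_lhs => rw [← hS, Finset.sum_powerset_map]
  refine Finset.sum_congr rfl fun T _ => ?_
  have hT : e ∉ T.map (Function.Embedding.subtype _) := by simp
  rw [Finset.card_insert_of_notMem hT, Finset.card_map, Dessin.delete_delete_cl, pow_succ,
    mul_smul, neg_one_smul, smul_neg]
  congr 4
  simp only [Finset.coe_insert, Finset.coe_map, Function.Embedding.coe_subtype,
    Set.singleton_union]
  rfl

theorem expandE_mem_Vd (D : Dessin) (S : Finset D.E) : expandE D S ∈ Vd S.card :=
  Submodule.subset_span ⟨D, S, rfl, rfl⟩

theorem Vd_succ_le (d : ℕ) : Vd (d + 1) ≤ Vd d := by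
  rw [Vd, Submodule.span_le]
  rintro x ⟨D, S, hS, rfl⟩
  obtain ⟨e, he⟩ := Finset.card_pos.mp (by omega : 0 < S.card)
  have hne : e ∉ S.erase e := Finset.notMem_erase e S
  have hcard : (S.erase e).card = d := by rw [Finset.card_erase_of_mem he, hS]; omega
  have h₁ := expandE_mem_Vd D (S.erase e)
  have h₂ := expandE_mem_Vd (D.delete {e}) ((S.erase e).subtype (· ∉ ({e} : Set D.E)))
  rw [Dessin.card_subtype_notMem_singleton hne] at h₂
  rw [hcard] at h₁ h₂
  rw [← Finset.insert_erase he, expandE_insert D hne]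
  exact sub_mem h₁ h₂

def fullExpansions (d : ℕ) : Set Vs :=
  {x | ∃ D : Dessin, Fintype.card D.E = d ∧ x = expandE D Finset.univ}

theorem expandE_mem_Vd_succ_sup (D : Dessin) (S : Finset D.E) :
    expandE D S ∈ Vd (S.card + 1) ⊔ Submodule.span ℂ (fullExpansions S.card) := by
  by_cases hS : S = Finset.univ
  · subst hS
    exact Submodule.mem_sup_right (Submodule.subset_span ⟨D, Finset.card_univ.symm, rfl⟩)
  obtain ⟨e, he⟩ : ∃ e, e ∉ S := by simpa [Finset.eq_univ_iff_forall] using hS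
  have hrest := expandE_mem_Vd_succ_sup (D.delete {e}) (S.subtype (· ∉ ({e} : Set D.E)))
  rw [Dessin.card_subtype_notMem_singleton he] at hrest
  have hsplit : expandE D S = expandE D (insert e S) +
      expandE (D.delete {e}) (S.subtype (· ∉ ({e} : Set D.E))) := by
    rw [expandE_insert D he, sub_add_cancel]
  rw [hsplit]
  refine add_mem (Submodule.mem_sup_left ?_) hrest
  rw [← Finset.card_insert_of_notMem he]
  exact expandE_mem_Vd D _
termination_by Fintype.card D.E
decreasing_by
  rw [Dessin.card_delete_singleton]
  exact Nat.sub_lt (Fintype.card_pos_iff.mpr ⟨e⟩) one_pos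

theorem Vd_eq_sup_span_fullExpansions (d : ℕ) :
    Vd d = Vd (d + 1) ⊔ Submodule.span ℂ (fullExpansions d) := by
  refine le_antisymm ?_ (sup_le (Vd_succ_le d) (Submodule.span_le.2 ?_))
  · rw [Vd, Submodule.span_le]
    rintro x ⟨D, S, rfl, rfl⟩
    exact expandE_mem_Vd_succ_sup D S
  · rintro x ⟨D, hD, rfl⟩
    simpa [hD] using expandE_mem_Vd D Finset.univ

noncomputable def DessinIso.fullExpansion : DessinIso → Vs :=
  Quot.lift (fun D => expandE D Finset.univ) fun _ _ h => h.expandE_univ_eq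

theorem fullExpansions_eq_image (d : ℕ) :
    fullExpansions d =
      DessinIso.fullExpansion '' {c | ∃ D : Dessin, D.cl = c ∧ Fintype.card D.E = d} := by
  ext x
  constructor
  · rintro ⟨D, hD, rfl⟩
    exact ⟨D.cl, ⟨D, rfl, hD⟩, rfl⟩
  · rintro ⟨_, ⟨D, rfl, hD⟩, rfl⟩
    exact ⟨D, hD, rfl⟩

/-- `V_{D,d}/V_{D,d+1}` is spanned by the images of the expansions `B_S`
where `D` has exactly `d` edges and `S` is the set of all edges of `D` (expressed as
`V_{D,d} = V_{D,d+1} ⊔ span {B_univ}`); in particular, if there are only finitely many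
isomorphism classes of dessins with exactly `d` edges, this quotient (realized as the
image of `V_{D,d}` in `V/V_{D,d+1}`) is finite dimensional. -/
theorem Vd_quotient_spanned (d : ℕ) :
    Vd d = Vd (d + 1) ⊔
        Submodule.span ℂ
          {x : Vs | ∃ D : Dessin, Fintype.card D.E = d ∧ x = expandE D Finset.univ} ∧
    ({c : DessinIso | ∃ D : Dessin, D.cl = c ∧ Fintype.card D.E = d}.Finite →
      FiniteDimensional ℂ ↥((Vd d).map (Vd (d + 1)).mkQ)) := by
  refine ⟨Vd_eq_sup_span_fullExpansions d, fun hfin => ?_⟩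
  rw [Vd_eq_sup_span_fullExpansions d, Submodule.map_sup, Submodule.mkQ_map_self, bot_sup_eq,
    Submodule.map_span, fullExpansions_eq_image]
  exact FiniteDimensional.span_of_finite ℂ ((hfin.image _).image _)
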